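/- arXiv:quant-ph/0503221 — 6 statements merged into one kernel-verified Lean document; each statement's English description precedes it below -/
import Mathlib

section
/- Let δ < √(2−√2) and let N be a δ-net of the unit sphere of ℂ^D (in the Euclidean norm). Let A be a Hermitian D×D matrix. Then max over y in N of |⟨y|A|y⟩| ≥ (1 − 2δ² + δ⁴/2) · ‖A‖_op, where ‖A‖_op is the operator norm of A. -/
/-!
Let `x` be a unit eigenvector of `A` whose eigenvalue `z` has `|z| = ‖A‖`, and `y ∈ N` a net point
with `‖x - y‖ ≤ δ`, so that `c = ⟪x, y⟫` has `|c| ≥ Re c ≥ 1 - δ²/2`. Splitting `y = c x + w` with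
`w ⊥ x` gives `⟪y, A y⟫ = |c|² z + ⟪w, A w⟫` and `‖w‖² = 1 - |c|²`, hence
`|⟪y, A y⟫| ≥ (2|c|² - 1) ‖A‖ ≥ (2 (1 - δ²/2)² - 1) ‖A‖ = (1 - 2δ² + δ⁴/2) ‖A‖`.
-/

open scoped ComplexOrder

theorem one_sub_sq_div_two_le_re_inner {𝕜 E : Type*} [RCLike 𝕜] [NormedAddCommGroup E]
    [InnerProductSpace 𝕜 E] {x y : E} {δ : ℝ} (hx : ‖x‖ = 1) (hy : ‖y‖ = 1)
    (hxy : dist x y ≤ δ) : 1 - δ ^ 2 / 2 ≤ RCLike.re (inner 𝕜 x y) := by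
  have hsq : ‖x - y‖ ^ 2 ≤ δ ^ 2 := by
    rw [← dist_eq_norm]; exact pow_le_pow_left₀ dist_nonneg hxy 2
  rw [norm_sub_sq (𝕜 := 𝕜), hx, hy] at hsq
  linarith

section Eigenvector

variable {𝕜 E : Type*} [RCLike 𝕜] [NormedAddCommGroup E] [InnerProductSpace 𝕜 E]
  {T : E →L[𝕜] E} {x y : E} {z : 𝕜}

theorem inner_apply_self_eq_of_apply_eq_smul (hT : (T : E →ₗ[𝕜] E).IsSymmetric)
    (hx : ‖x‖ = 1) (hTx : T x = z • x) (y : E) :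
    inner 𝕜 y (T y) =
      ‖inner 𝕜 x y‖ ^ 2 * z + inner 𝕜 (y - inner 𝕜 x y • x) (T (y - inner 𝕜 x y • x)) := by
  set c := inner 𝕜 x y
  set w := y - c • x with hw
  have hxx : inner 𝕜 x x = (1 : 𝕜) := by simp [inner_self_eq_norm_sq_to_K, hx]
  have hxw : inner 𝕜 x w = 0 := by
    rw [hw, inner_sub_right, inner_smul_right, hxx, mul_one, sub_self]
  have hwx : inner 𝕜 w x = 0 := by rw [← inner_conj_symm, hxw, map_zero]
  have hxTw : inner 𝕜 x (T w) = 0 := by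
    rw [← ContinuousLinearMap.coe_coe, ← hT x w, ContinuousLinearMap.coe_coe, hTx,
      inner_smul_left, hxw, mul_zero]
  have hy : y = c • x + w := by rw [hw]; abel
  conv_lhs => rw [hy]
  simp only [map_add, map_smul, hTx, inner_add_left, inner_add_right, inner_smul_left,
    inner_smul_right, hxx, hxTw, hwx]
  rw [← RCLike.conj_mul]
  ring

theorem norm_sub_inner_smul_sq (hx : ‖x‖ = 1) (y : E) :
    ‖y - inner 𝕜 x y • x‖ ^ 2 = ‖y‖ ^ 2 - ‖inner 𝕜 x y‖ ^ 2 := by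
  rw [norm_sub_sq (𝕜 := 𝕜), inner_smul_right, ← inner_conj_symm y x, RCLike.mul_conj,
    norm_smul, hx]
  norm_cast
  ring

theorem two_mul_norm_inner_sq_sub_one_mul_opNorm_le (hT : (T : E →ₗ[𝕜] E).IsSymmetric)
    (hx : ‖x‖ = 1) (hTx : T x = z • x) (hz : ‖z‖ = ‖T‖) (hy : ‖y‖ = 1) :
    (2 * ‖inner 𝕜 x y‖ ^ 2 - 1) * ‖T‖ ≤ ‖inner 𝕜 y (T y)‖ := by
  set w := y - inner 𝕜 x y • x
  have hw : ‖w‖ ^ 2 = 1 - ‖inner 𝕜 x y‖ ^ 2 := by rw [norm_sub_inner_smul_sq hx, hy, one_pow]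
  have hwTw : ‖inner 𝕜 w (T w)‖ ≤ ‖T‖ * ‖w‖ ^ 2 := by
    calc ‖inner 𝕜 w (T w)‖ ≤ ‖w‖ * (‖T‖ * ‖w‖) :=
          (norm_inner_le_norm w (T w)).trans (by gcongr; exact T.le_opNorm w)
      _ = ‖T‖ * ‖w‖ ^ 2 := by ring
  rw [inner_apply_self_eq_of_apply_eq_smul hT hx hTx]
  calc (2 * ‖inner 𝕜 x y‖ ^ 2 - 1) * ‖T‖
      = ‖(‖inner 𝕜 x y‖ : 𝕜) ^ 2 * z‖ - ‖T‖ * ‖w‖ ^ 2 := by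
        rw [hw, norm_mul, norm_pow, RCLike.norm_ofReal, abs_norm, hz]; ring
    _ ≤ ‖(‖inner 𝕜 x y‖ : 𝕜) ^ 2 * z‖ - ‖inner 𝕜 w (T w)‖ := by gcongr
    _ ≤ _ := norm_sub_le_norm_add _ _

theorem mul_opNorm_le_norm_inner_apply_self_of_dist_le (hT : (T : E →ₗ[𝕜] E).IsSymmetric)
    (hx : ‖x‖ = 1) (hTx : T x = z • x) (hz : ‖z‖ = ‖T‖) (hy : ‖y‖ = 1) {δ : ℝ}
    (hxy : dist x y ≤ δ) (hδ : δ ^ 2 ≤ 2) :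
    (1 - 2 * δ ^ 2 + δ ^ 4 / 2) * ‖T‖ ≤ ‖inner 𝕜 y (T y)‖ := by
  have hc : 1 - δ ^ 2 / 2 ≤ ‖inner 𝕜 x y‖ :=
    (one_sub_sq_div_two_le_re_inner hx hy hxy).trans (RCLike.re_le_norm _)
  have hc2 : (1 - δ ^ 2 / 2) ^ 2 ≤ ‖inner 𝕜 x y‖ ^ 2 := pow_le_pow_left₀ (by linarith) hc 2
  calc (1 - 2 * δ ^ 2 + δ ^ 4 / 2) * ‖T‖ = (2 * (1 - δ ^ 2 / 2) ^ 2 - 1) * ‖T‖ := by ring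
    _ ≤ (2 * ‖inner 𝕜 x y‖ ^ 2 - 1) * ‖T‖ := by gcongr
    _ ≤ ‖inner 𝕜 y (T y)‖ := two_mul_norm_inner_sq_sub_one_mul_opNorm_le hT hx hTx hz hy

end Eigenvector

theorem IsSelfAdjoint.exists_unit_eigenvector_norm_eq_opNorm {E : Type*} [NormedAddCommGroup E]
    [InnerProductSpace ℂ E] [FiniteDimensional ℂ E] [Nontrivial E] {T : E →L[ℂ] E}
    (hT : IsSelfAdjoint T) : ∃ (z : ℂ) (x : E), ‖x‖ = 1 ∧ T x = z • x ∧ ‖z‖ = ‖T‖ := by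
  obtain ⟨z, hz, hzT⟩ := spectrum.exists_nnnorm_eq_spectralRadius T
  rw [hT.spectralRadius_eq_nnnorm, ENNReal.coe_inj] at hzT
  rw [ContinuousLinearMap.spectrum_eq, ← Module.End.hasEigenvalue_iff_mem_spectrum] at hz
  obtain ⟨v, hv⟩ := hz.exists_hasEigenvector
  refine ⟨z, (‖v‖⁻¹ : ℂ) • v, ?_, ?_, congrArg NNReal.toReal hzT⟩
  · exact norm_smul_inv_norm hv.2
  · rw [map_smul, ← ContinuousLinearMap.coe_coe, hv.apply_eq_smul, smul_comm]

theorem stmt_0 (D : ℕ) (hD : 0 < D) (δ : ℝ) (hδ : δ < Real.sqrt (2 - Real.sqrt 2))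
    (N : Set (EuclideanSpace ℂ (Fin D)))
    (hNsub : N ⊆ Metric.sphere (0 : EuclideanSpace ℂ (Fin D)) 1)
    (hNnet : ∀ x ∈ Metric.sphere (0 : EuclideanSpace ℂ (Fin D)) 1, ∃ y ∈ N, dist x y ≤ δ)
    (A : Matrix (Fin D) (Fin D) ℂ) (hA : A.IsHermitian) :
    ∃ y ∈ N,
      (1 - 2 * δ ^ 2 + δ ^ 4 / 2) * ‖Matrix.toEuclideanCLM (𝕜 := ℂ) A‖ ≤
        ‖inner ℂ y ((Matrix.toEuclideanCLM (𝕜 := ℂ) A) y)‖ := by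
  have : Nonempty (Fin D) := ⟨⟨0, hD⟩⟩
  have hT : (Matrix.toEuclideanCLM (𝕜 := ℂ) A :
      EuclideanSpace ℂ (Fin D) →ₗ[ℂ] EuclideanSpace ℂ (Fin D)).IsSymmetric :=
    Matrix.isSymmetric_toEuclideanLin_iff.mpr hA
  obtain ⟨z, x, hx, hTx, hz⟩ := hT.isSelfAdjoint.exists_unit_eigenvector_norm_eq_opNorm
  obtain ⟨y, hyN, hxy⟩ := hNnet x (mem_sphere_zero_iff_norm.mpr hx)
  have hδ2 : δ ^ 2 ≤ 2 := by
    have := (Real.lt_sqrt (dist_nonneg.trans hxy)).mp hδ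
    linarith [Real.sqrt_nonneg 2]
  exact ⟨y, hyN, mul_opNorm_le_norm_inner_apply_self_of_dist_le hT hx hTx hz
    (mem_sphere_zero_iff_norm.mp (hNsub hyN)) hxy hδ2⟩
end

section
/- Let K = conv{x₁ ⊗ ... ⊗ x_m : each x_k in the unit ball of ℂ^D} ⊂ (ℂ^D)^{⊗m} be the projective tensor product of m copies of the D-dimensional complex Euclidean unit ball. Then K contains the Euclidean ball of radius D^{-(m-1)/2} in (ℂ^D)^{⊗m} ≅ ℂ^{D^m}. Equivalently, for every tensor A ∈ (ℂ^D)^{⊗m}, the injective norm sup{|⟨A, x¹⊗...⊗x^m⟩| : x^k unit vectors} is at least D^{-(m-1)/2} times the Euclidean (Hilbert–Schmidt) norm of A. -/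
/-!
Split off the first tensor factor: `A` is the family of its fibres `v_g = A(·, g)`,
`g ∈ [D]^(m-1)`, whose squared norms add up to `‖A‖²`, so some fibre has
`‖v_g‖² ≥ D^(-(m-1)) ‖A‖²`. Pairing `A` with `conj(v_g)/‖v_g‖ ⊗ e_{g₁} ⊗ ⋯ ⊗ e_{g_(m-1)}`
gives exactly `‖v_g‖`.
-/

open Finset

section

variable {𝕜 κ : Type*} [RCLike 𝕜] [Fintype κ] {n : ℕ}

def headFiber (A : EuclideanSpace 𝕜 (Fin (n + 1) → κ)) (g : Fin n → κ) :
    EuclideanSpace 𝕜 κ :=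
  WithLp.toLp 2 fun j => A (Fin.cons j g)

theorem sum_sq_norm_headFiber (A : EuclideanSpace 𝕜 (Fin (n + 1) → κ)) :
    ∑ g, ‖headFiber A g‖ ^ 2 = ‖A‖ ^ 2 := by
  simp only [EuclideanSpace.norm_sq_eq, headFiber]
  rw [← (Fin.consEquiv fun _ => κ).sum_comp, Fintype.sum_prod_type, Finset.sum_comm]
  rfl

theorem exists_sq_norm_le_card_pow_mul_sq_norm_headFiber [Nonempty κ]
    (A : EuclideanSpace 𝕜 (Fin (n + 1) → κ)) :
    ∃ g, ‖A‖ ^ 2 ≤ (Fintype.card κ : ℝ) ^ n * ‖headFiber A g‖ ^ 2 := by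
  obtain ⟨g, -, hg⟩ := Finset.exists_le_of_sum_le (s := univ) univ_nonempty
    (f := fun _ => ‖A‖ ^ 2) (g := fun g => (Fintype.card κ : ℝ) ^ n * ‖headFiber A g‖ ^ 2)
    (by simp [← mul_sum, sum_sq_norm_headFiber])
  exact ⟨g, hg⟩

theorem sum_mul_prod_cons_single [DecidableEq κ] (A : EuclideanSpace 𝕜 (Fin (n + 1) → κ))
    (y : EuclideanSpace 𝕜 κ) (g : Fin n → κ) :
    ∑ i, A i * ∏ k, (Fin.cons y fun k => EuclideanSpace.single (g k) 1 :
        Fin (n + 1) → EuclideanSpace 𝕜 κ) k (i k) =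
      ∑ j, headFiber A g j * y j := by
  rw [← (Fin.consEquiv fun _ => κ).sum_comp, Fintype.sum_prod_type]
  refine Fintype.sum_congr _ _ fun j => ?_
  simp [Fin.consEquiv, Fin.prod_univ_succ, PiLp.single_apply, Fintype.prod_boole, headFiber,
    ← funext_iff]

end

theorem EuclideanSpace.exists_norm_eq_one_sum_mul_eq_norm {𝕜 ι : Type*} [RCLike 𝕜] [Fintype ι]
    [Nonempty ι] (v : EuclideanSpace 𝕜 ι) :
    ∃ y : EuclideanSpace 𝕜 ι, ‖y‖ = 1 ∧ ∑ j, v j * y j = ‖v‖ := by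
  classical
  rcases eq_or_ne v 0 with rfl | hv
  · exact ⟨EuclideanSpace.single (Classical.arbitrary ι) 1, by simp, by simp⟩
  have hv' : ‖v‖ ≠ 0 := norm_ne_zero_iff.mpr hv
  have hsum : ∑ j, v j * star (v j) = (‖v‖ ^ 2 : ℝ) := by
    simp [EuclideanSpace.norm_sq_eq, RCLike.mul_conj]
  refine ⟨WithLp.toLp 2 fun j => (‖v‖⁻¹ : 𝕜) * star (v j), ?_, ?_⟩
  · rw [EuclideanSpace.norm_eq]
    simp [mul_pow, ← Finset.mul_sum, ← EuclideanSpace.norm_sq_eq, hv']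
  · simp only [mul_left_comm _ (‖v‖⁻¹ : 𝕜), ← Finset.mul_sum, hsum]
    push_cast
    field_simp

theorem Real.rpow_neg_half_mul_le_of_sq_le_pow_mul_sq {n : ℕ} {c a b : ℝ} (hc : 0 < c)
    (hb : 0 ≤ b) (h : a ^ 2 ≤ c ^ n * b ^ 2) : c ^ (-((n : ℝ) / 2)) * a ≤ b := by
  have hsq : (c ^ (-((n : ℝ) / 2))) ^ 2 = (c ^ n)⁻¹ := by
    rw [← Real.rpow_mul_natCast hc.le, show -((n : ℝ) / 2) * (2 : ℕ) = -n by push_cast; ring,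
      Real.rpow_neg hc.le, Real.rpow_natCast]
  refine abs_le_of_sq_le_sq' ?_ hb |>.2
  rw [mul_pow, hsq, inv_mul_le_iff₀ (by positivity)]
  exact h

/-- The projective tensor product of `m` copies of the unit ball of `ℂ^D`
contains the Euclidean ball of radius `D^{-(m-1)/2}`; equivalently (dually), for every
tensor `A` the injective norm is at least `D^{-(m-1)/2}` times the Euclidean norm of `A`,
and moreover the supremum defining the injective norm is attained on some tuple of unit
vectors witnessing this bound. -/
theorem stmt_4 (D m : ℕ) (hD : 0 < D) (hm : 1 ≤ m)
    (A : EuclideanSpace ℂ (Fin m → Fin D)) :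
    ∃ x : Fin m → EuclideanSpace ℂ (Fin D), (∀ k, ‖x k‖ = 1) ∧
      (D : ℝ) ^ (-(((m : ℝ) - 1) / 2)) * ‖A‖ ≤
        ‖∑ i : Fin m → Fin D, A i * ∏ k, x k (i k)‖ := by
  obtain ⟨n, rfl⟩ : ∃ n, m = n + 1 := ⟨m - 1, by omega⟩
  have : Nonempty (Fin D) := ⟨⟨0, hD⟩⟩
  obtain ⟨g, hg⟩ := exists_sq_norm_le_card_pow_mul_sq_norm_headFiber A
  obtain ⟨y, hy, hyA⟩ := EuclideanSpace.exists_norm_eq_one_sum_mul_eq_norm (headFiber A g)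
  refine ⟨Fin.cons y fun k => EuclideanSpace.single (g k) 1, Fin.cases hy fun k => by simp, ?_⟩
  rw [sum_mul_prod_cons_single, hyA, RCLike.norm_ofReal, abs_norm]
  rw [Fintype.card_fin] at hg
  have hexp : (((n + 1 : ℕ) : ℝ) - 1) / 2 = n / 2 := by push_cast; ring
  rw [hexp]
  exact Real.rpow_neg_half_mul_le_of_sq_le_pow_mul_sq (by positivity) (norm_nonneg _) hg
end

section
/- Let u be a unit vector in ℝ^n, H₀ = u^⊥, h > 0, H = H₀ + hu, and let W ⊂ H be a convex body with Ω = conv(W ∪ −W). If the unit ball B₂^n is the Löwner (minimal-volume circumscribed) ellipsoid of Ω, then h = 1/√n and B₂^n ∩ H is the Löwner ellipsoid of W within H. -/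
open MeasureTheory Pointwise

/-- An ellipsoid in `ℝ^k`: an affine image of the closed Euclidean unit ball under an
invertible linear map (plus a translation). -/
def IsEllipsoid {k : ℕ} (E : Set (EuclideanSpace ℝ (Fin k))) : Prop :=
  ∃ (L : EuclideanSpace ℝ (Fin k) ≃ₗ[ℝ] EuclideanSpace ℝ (Fin k))
    (c : EuclideanSpace ℝ (Fin k)),
    E = (fun x => c + L x) '' Metric.closedBall (0 : EuclideanSpace ℝ (Fin k)) 1

/-- `E` is the Löwner (minimal-volume circumscribed) ellipsoid of `K`. -/
def IsLoewner {k : ℕ} (K E : Set (EuclideanSpace ℝ (Fin k))) : Prop :=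
  IsEllipsoid E ∧ K ⊆ E ∧
    ∀ E', IsEllipsoid E' → K ⊆ E' → volume E ≤ volume E'

/-!
Write `B` for the unit ball and `x₀` for the point with `f x₀ = h u`. For `α > 0`, an ellipsoid
`x₀ + w + L(√(1 - (h/α)²) B)` of `H` is the section at height `h` of the centred ellipsoid `T(B)`,
where `T u = α u + (α/h) f'(w)` and `T ∘ f' = f' ∘ L` on `u^⊥` (`f'` the linear part of `f`). As
`T(B)` is symmetric, it contains `Ω` as soon as that section contains `W`, so the minimality of `B`
gives `α |det L| = |det T| ≥ 1`.

Taking for the section the ball `B ∩ H` of radius `√(1 - h²)` with `α = √(n+1) h` yields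
`(n+1)h² ((n+1)(1-h²)/n)ⁿ ≥ 1`, which by AM-GM forces `(n+1)h² = 1`. Taking `α = 1` and any
ellipsoid `c + L(B)` of `H` containing `W` gives `|det L| ≥ √(1-h²)ⁿ`, so `B ∩ H` is the smallest.
-/

open RealInnerProductSpace Module Metric

section Loewner

variable {k : ℕ}

theorem volume_image_closedBall (c : EuclideanSpace ℝ (Fin k))
    (L : EuclideanSpace ℝ (Fin k) ≃ₗ[ℝ] EuclideanSpace ℝ (Fin k)) :
    volume ((fun x => c + L x) '' closedBall 0 1) =
      ENNReal.ofReal |LinearMap.det (L : EuclideanSpace ℝ (Fin k) →ₗ[ℝ] _)| *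
        volume (closedBall (0 : EuclideanSpace ℝ (Fin k)) 1) := by
  rw [show (fun x => c + L x) = (c +ᵥ ·) ∘ (L : EuclideanSpace ℝ (Fin k) →ₗ[ℝ] _) from rfl,
    Set.image_comp, Set.image_vadd, measure_vadd, Measure.addHaar_image_linearMap]

theorem isEllipsoid_image_closedBall
    {T : EuclideanSpace ℝ (Fin k) →ₗ[ℝ] EuclideanSpace ℝ (Fin k)} (hT : LinearMap.det T ≠ 0) :
    IsEllipsoid (T '' closedBall 0 1) :=
  have hbij := (Module.End.isUnit_iff T).1 ((LinearMap.isUnit_iff_isUnit_det T).2 hT.isUnit)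
  ⟨LinearEquiv.ofBijective T hbij, 0, by simp⟩

theorem IsLoewner.one_le_abs_det {K : Set (EuclideanSpace ℝ (Fin k))}
    (hK : IsLoewner K (closedBall 0 1))
    {T : EuclideanSpace ℝ (Fin k) →ₗ[ℝ] EuclideanSpace ℝ (Fin k)} (hT : LinearMap.det T ≠ 0)
    (hKT : K ⊆ T '' closedBall 0 1) : 1 ≤ |LinearMap.det T| := by
  have hvol := hK.2.2 _ (isEllipsoid_image_closedBall hT) hKT
  rw [Measure.addHaar_image_linearMap, ← one_mul (volume (closedBall _ _)), ← mul_assoc, mul_one,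
    ENNReal.mul_le_mul_iff_left (measure_closedBall_pos volume 0 one_pos).ne'
      measure_closedBall_lt_top.ne] at hvol
  exact ENNReal.one_le_ofReal.1 hvol

theorem isLoewner_closedBall {K : Set (EuclideanSpace ℝ (Fin k))} {x₀ : EuclideanSpace ℝ (Fin k)}
    {r : ℝ} (hr : 0 < r) (hK : K ⊆ closedBall x₀ r)
    (hmin : ∀ (c : EuclideanSpace ℝ (Fin k))
      (L : EuclideanSpace ℝ (Fin k) ≃ₗ[ℝ] EuclideanSpace ℝ (Fin k)),
      K ⊆ (fun x => c + L x) '' closedBall 0 1 →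
        r ^ k ≤ |LinearMap.det (L : EuclideanSpace ℝ (Fin k) →ₗ[ℝ] _)|) :
    IsLoewner K (closedBall x₀ r) := by
  refine ⟨⟨LinearEquiv.smulOfNeZero ℝ _ r hr.ne', x₀, ?_⟩, hK, ?_⟩
  · rw [← affinity_unitClosedBall hr.le, ← Set.image_smul, ← Set.image_vadd, ← Set.image_comp]
    rfl
  · rintro _ ⟨L, c, rfl⟩ hKE
    rw [volume_image_closedBall c L, Measure.addHaar_closedBall' _ _ hr.le,
      finrank_euclideanSpace_fin]
    gcongr
    exact hmin c L hKE

theorem isLoewner_of_nonempty_of_fin_zero {K E : Set (EuclideanSpace ℝ (Fin 0))}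
    (hK : K.Nonempty) (hKE : K ⊆ E) : IsLoewner K E := by
  have hE : E = (fun x => 0 + LinearEquiv.refl ℝ _ x) '' closedBall 0 1 := by
    rw [Subsingleton.eq_univ_of_nonempty (hK.mono hKE),
      Subsingleton.eq_univ_of_nonempty ((nonempty_closedBall.2 zero_le_one).image _)]
  refine ⟨⟨_, _, hE⟩, hKE, fun E' _ hKE' => ?_⟩
  rw [Subsingleton.eq_univ_of_nonempty (hK.mono hKE),
    Subsingleton.eq_univ_of_nonempty (hK.mono hKE')]

end Loewner

theorem Matrix.det_eq_mul_det_submatrix_succ {R : Type*} [CommRing R] {n : ℕ}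
    (A : Matrix (Fin (n + 1)) (Fin (n + 1)) R) (hA : ∀ j : Fin n, A 0 j.succ = 0) :
    A.det = A 0 0 * (A.submatrix Fin.succ Fin.succ).det := by
  simp [Matrix.det_succ_row_zero, Fin.sum_univ_succ, hA]

section Extension

variable {E V : Type*} [NormedAddCommGroup E] [InnerProductSpace ℝ E] [FiniteDimensional ℝ E]
  [NormedAddCommGroup V] [InnerProductSpace ℝ V] {u : V}

theorem exists_orthonormalBasis_cons (hV : finrank ℝ V = finrank ℝ E + 1) (hu : ‖u‖ = 1)
    (F : E →ₗᵢ[ℝ] V) (hF : ∀ z, ⟪u, F z⟫ = 0) :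
    ∃ b : OrthonormalBasis (Fin (finrank ℝ E + 1)) ℝ V,
      b 0 = u ∧ ∀ j, b j.succ = F (stdOrthonormalBasis ℝ E j) := by
  set c := stdOrthonormalBasis ℝ E
  have hon : Orthonormal ℝ (Fin.cons u (F ∘ c) : Fin (finrank ℝ E + 1) → V) := by
    rw [orthonormal_iff_ite]
    intro i j
    refine Fin.cases ?_ (fun i => ?_) i <;> refine Fin.cases ?_ (fun j => ?_) j
    · simp [hu]
    · simp [hF, (Fin.succ_ne_zero j).symm]
    · simp [real_inner_comm, hF, Fin.succ_ne_zero i]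
    · simp [orthonormal_iff_ite.1 c.orthonormal]
  have : FiniteDimensional ℝ V := Module.finite_of_finrank_eq_succ hV
  refine ⟨OrthonormalBasis.mk hon ?_, ?_, fun j => ?_⟩
  · rw [hon.linearIndependent.span_eq_top_of_card_eq_finrank (by simp [hV])]
  · rw [OrthonormalBasis.coe_mk]; rfl
  · rw [OrthonormalBasis.coe_mk]; rfl

theorem exists_linearMap_extension (hV : finrank ℝ V = finrank ℝ E + 1) (hu : ‖u‖ = 1)
    (F : E →ₗᵢ[ℝ] V) (hF : ∀ z, ⟪u, F z⟫ = 0) (v : V) (L : E →ₗ[ℝ] E) :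
    ∃ T : V →ₗ[ℝ] V, T u = v ∧ (∀ z, T (F z) = F (L z)) ∧
      LinearMap.det T = ⟪u, v⟫ * LinearMap.det L := by
  obtain ⟨b, hb0, hbs⟩ := exists_orthonormalBasis_cons hV hu F hF
  set c := stdOrthonormalBasis ℝ E
  set w : Fin (finrank ℝ E + 1) → V := Fin.cons v (F ∘ L ∘ c)
  set T := b.toBasis.constr ℝ w
  have hTb : ∀ i, T (b i) = w i := by
    simpa only [b.coe_toBasis] using b.toBasis.constr_basis ℝ _
  have hTu : T u = v := by rw [← hb0, hTb]; rfl
  have hTF : ∀ z, T (F z) = F (L z) := by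
    refine LinearMap.congr_fun (c.toBasis.ext (f₁ := T ∘ₗ F.toLinearMap)
      (f₂ := F.toLinearMap ∘ₗ L) fun j => ?_)
    simpa [← hbs, w] using hTb j.succ
  refine ⟨T, hTu, hTF, ?_⟩
  have hentry : ∀ i j, LinearMap.toMatrix b.toBasis b.toBasis T i j = ⟪b i, T (b j)⟫ := by
    simp [LinearMap.toMatrix_apply, b.repr_apply_apply]
  rw [← LinearMap.det_toMatrix b.toBasis, Matrix.det_eq_mul_det_submatrix_succ _ fun j => ?_,
    ← LinearMap.det_toMatrix c.toBasis]
  · congr 1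
    · rw [hentry, hb0, hTu]
    · congr 1
      ext i j
      simp [hentry, hbs, hTF, LinearMap.toMatrix_apply, c.repr_apply_apply]
  · rw [hentry, hb0, hbs, hTF]
    exact hF _

end Extension

namespace AffineIsometry

variable {E V : Type*} [NormedAddCommGroup E] [InnerProductSpace ℝ E]
  [NormedAddCommGroup V] [InnerProductSpace ℝ V] {f : E →ᵃⁱ[ℝ] V} {u : V} {h : ℝ} {x₀ : E}

theorem map_add_eq (x v : E) : f (x + v) = f x + f.linearIsometry v := by
  rw [add_comm x, ← vadd_eq_add, f.map_vadd, vadd_eq_add, add_comm]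

theorem inner_linearIsometry_eq_zero (hf : ∀ x, ⟪u, f x⟫ = h) (z : E) :
    ⟪u, f.linearIsometry z⟫ = 0 := by
  rw [← add_sub_cancel_left (f 0) (f.linearIsometry z), ← f.map_add_eq, inner_sub_right, hf, hf,
    sub_self]

theorem exists_apply_eq_smul [FiniteDimensional ℝ E] (hV : finrank ℝ V = finrank ℝ E + 1)
    (hu : ‖u‖ = 1) (hf : ∀ x, ⟪u, f x⟫ = h) : ∃ x₀, f x₀ = h • u := by
  have : FiniteDimensional ℝ V := Module.finite_of_finrank_eq_succ hV
  have hrange : LinearMap.range f.linearIsometry.toLinearMap = (ℝ ∙ u)ᗮ := by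
    apply Submodule.eq_of_le_of_finrank_eq
    · rintro _ ⟨z, rfl⟩
      exact Submodule.mem_orthogonal_singleton_iff_inner_right.2
        (inner_linearIsometry_eq_zero hf z)
    · have := (ℝ ∙ u).finrank_add_finrank_orthogonal
      rw [finrank_span_singleton (norm_ne_zero_iff.1 (hu ▸ one_ne_zero)), hV] at this
      rw [LinearMap.finrank_range_of_inj f.linearIsometry.injective]
      omega
  have hmem : h • u - f 0 ∈ (ℝ ∙ u)ᗮ := by
    rw [Submodule.mem_orthogonal_singleton_iff_inner_right, inner_sub_right, real_inner_smul_right,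
      hf, real_inner_self_eq_norm_sq, hu]
    ring
  obtain ⟨z, hz⟩ := hrange ▸ hmem
  refine ⟨z, ?_⟩
  rw [← zero_add z, f.map_add_eq, ← LinearIsometry.coe_toLinearMap, hz, add_sub_cancel]

variable (hu : ‖u‖ = 1) (hf : ∀ x, ⟪u, f x⟫ = h) (hx₀ : f x₀ = h • u)
include hu hf hx₀

theorem norm_apply_sq (x : E) : ‖f x‖ ^ 2 = ‖x - x₀‖ ^ 2 + h ^ 2 := by
  rw [← add_sub_cancel x₀ x, f.map_add_eq, hx₀, add_sub_cancel_left, norm_add_sq_real,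
    real_inner_smul_left, inner_linearIsometry_eq_zero hf, f.linearIsometry.norm_map,
    norm_smul, hu, Real.norm_eq_abs, mul_one, sq_abs]
  ring

theorem mem_preimage_closedBall_iff {x : E} :
    x ∈ f ⁻¹' closedBall 0 1 ↔ ‖x - x₀‖ ^ 2 ≤ 1 - h ^ 2 := by
  rw [Set.mem_preimage, mem_closedBall_zero_iff, ← sq_le_one_iff₀ (norm_nonneg _),
    norm_apply_sq hu hf hx₀, le_sub_iff_add_le]

theorem preimage_closedBall_eq (hh : h ^ 2 ≤ 1) :
    f ⁻¹' closedBall 0 1 = closedBall x₀ √(1 - h ^ 2) := by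
  ext x
  rw [mem_preimage_closedBall_iff hu hf hx₀, mem_closedBall, dist_eq_norm,
    Real.le_sqrt (norm_nonneg _) (sub_nonneg.2 hh)]

theorem sq_le_one_of_preimage_nonempty (hne : (f ⁻¹' closedBall 0 1).Nonempty) : h ^ 2 ≤ 1 := by
  obtain ⟨x, hx⟩ := hne
  have := (mem_preimage_closedBall_iff hu hf hx₀).1 hx
  nlinarith [sq_nonneg ‖x - x₀‖]

theorem sq_lt_one_of_interior_preimage_nonempty [Nontrivial E]
    (hne : (interior (f ⁻¹' closedBall 0 1)).Nonempty) : h ^ 2 < 1 := by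
  by_contra! h1
  have hsub : f ⁻¹' closedBall 0 1 ⊆ {x₀} := fun x hx => by
    have := (mem_preimage_closedBall_iff hu hf hx₀).1 hx
    have : ‖x - x₀‖ ^ 2 = 0 := le_antisymm (by linarith) (sq_nonneg _)
    simpa [sub_eq_zero] using this
  simpa using hne.mono (interior_mono hsub)

end AffineIsometry

theorem one_add_mul_one_sub_div_pow_lt_one {n : ℕ} {s : ℝ} (hs : s ≠ 0) (hs1 : -1 ≤ s)
    (hsn : s ≤ n) : (1 + s) * (1 - s / n) ^ n < 1 :=
  calc (1 + s) * (1 - s / n) ^ n ≤ (1 + s) * Real.exp (-s) := by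
        gcongr
        · linarith
        · exact Real.one_sub_div_pow_le_exp_neg hsn
    _ < Real.exp s * Real.exp (-s) := by
        gcongr
        linarith [Real.add_one_lt_exp hs]
    _ = 1 := by rw [← Real.exp_add, add_neg_cancel, Real.exp_zero]

section LiftedEllipsoid

variable {E : Type*} [NormedAddCommGroup E] [InnerProductSpace ℝ E] {k : ℕ}
  {f : E →ᵃⁱ[ℝ] EuclideanSpace ℝ (Fin k)} {u : EuclideanSpace ℝ (Fin k)} {h : ℝ} {x₀ : E}
  {W : Set E}

theorem subset_preimage_of_isLoewner
    (hLoew : IsLoewner (convexHull ℝ ((f '' W) ∪ -(f '' W))) (closedBall 0 1)) :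
    W ⊆ f ⁻¹' closedBall 0 1 :=
  fun x hx => hLoew.2.1 (subset_convexHull ℝ _ (Or.inl ⟨x, hx, rfl⟩))

theorem one_le_mul_abs_det_of_subset_section [FiniteDimensional ℝ E]
    (hk : k = finrank ℝ E + 1) (hh : 0 < h) (hu : ‖u‖ = 1) (hf : ∀ x, ⟪u, f x⟫ = h)
    (hx₀ : f x₀ = h • u)
    (hLoew : IsLoewner (convexHull ℝ ((f '' W) ∪ -(f '' W))) (closedBall 0 1))
    {α : ℝ} (hα : 0 < α) (w : E) {L : E →ₗ[ℝ] E} (hL : LinearMap.det L ≠ 0)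
    (hW : ∀ x ∈ W, ∃ z, ‖z‖ ^ 2 ≤ 1 - (h / α) ^ 2 ∧ x = x₀ + w + L z) :
    1 ≤ α * |LinearMap.det L| := by
  set F := f.linearIsometry
  have hFu := AffineIsometry.inner_linearIsometry_eq_zero hf
  obtain ⟨T, hTu, hTF, hdet⟩ :=
    exists_linearMap_extension (by simp [hk]) hu F hFu (α • u + (α / h) • F w) L
  have huv : ⟪u, α • u + (α / h) • F w⟫ = α := by
    rw [inner_add_right, real_inner_smul_right, real_inner_smul_right, real_inner_self_eq_norm_sq,
      hu, hFu]
    ring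
  rw [huv] at hdet
  have hfW : f '' W ⊆ T '' closedBall 0 1 := by
    rintro _ ⟨x, hx, rfl⟩
    obtain ⟨z, hz, rfl⟩ := hW x hx
    refine ⟨(h / α) • u + F z, ?_, ?_⟩
    · rw [mem_closedBall_zero_iff, ← sq_le_one_iff₀ (norm_nonneg _), norm_add_sq_real,
        real_inner_smul_left, hFu, F.norm_map, norm_smul, hu, Real.norm_eq_abs, mul_one, sq_abs]
      linarith
    · rw [map_add, map_smul, hTu, hTF, add_assoc, f.map_add_eq, hx₀, map_add, smul_add, smul_smul,
        smul_smul, div_mul_cancel₀ h hα.ne', div_mul_div_cancel₀ hα.ne', div_self hh.ne', one_smul,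
        add_assoc]
  have hsymm : -(T '' closedBall 0 1) ⊆ T '' closedBall 0 1 := by
    rintro x ⟨v, hv, hvx⟩
    exact ⟨-v, by simpa using hv, by rw [map_neg, hvx, neg_neg]⟩
  have hK : convexHull ℝ ((f '' W) ∪ -(f '' W)) ⊆ T '' closedBall 0 1 :=
    convexHull_min (Set.union_subset hfW ((Set.neg_subset_neg.2 hfW).trans hsymm))
      ((convex_closedBall 0 1).linear_image T)
  have := hLoew.one_le_abs_det (hdet ▸ mul_ne_zero hα.ne' hL) hK
  rwa [hdet, abs_mul, abs_of_pos hα] at this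

end LiftedEllipsoid

section Hyperplane

variable {n : ℕ} {h : ℝ} {u : EuclideanSpace ℝ (Fin (n + 1))}
  {f : EuclideanSpace ℝ (Fin n) →ᵃⁱ[ℝ] EuclideanSpace ℝ (Fin (n + 1))}
  {W : Set (EuclideanSpace ℝ (Fin n))} {x₀ : EuclideanSpace ℝ (Fin n)}
  (hu : ‖u‖ = 1) (hf : ∀ x, ⟪u, f x⟫ = h) (hx₀ : f x₀ = h • u)
  (hLoew : IsLoewner (convexHull ℝ ((f '' W) ∪ -(f '' W))) (closedBall 0 1))
  (hW : (interior W).Nonempty)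
include hu hf hx₀ hLoew hW

theorem height_sq_lt_one (hn : 0 < n) : h ^ 2 < 1 :=
  have : Nontrivial (EuclideanSpace ℝ (Fin n)) :=
    Module.nontrivial_of_finrank_pos (R := ℝ) (by simpa using hn)
  AffineIsometry.sq_lt_one_of_interior_preimage_nonempty hu hf hx₀
    (hW.mono (interior_mono (subset_preimage_of_isLoewner hLoew)))

variable (hh : 0 < h)
include hh

theorem one_le_succ_mul_sq_mul_pow (hn : 0 < n) :
    1 ≤ ((n : ℝ) + 1) * h ^ 2 * (((n : ℝ) + 1) * (1 - h ^ 2) / n) ^ n := by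
  have hlt := height_sq_lt_one hu hf hx₀ hLoew hW hn
  set α := √((n : ℝ) + 1) * h
  set β := √(((n : ℝ) + 1) * (1 - h ^ 2) / n)
  have hα2 : α ^ 2 = ((n : ℝ) + 1) * h ^ 2 := by rw [mul_pow, Real.sq_sqrt (by positivity)]
  have hβ2 : β ^ 2 = ((n : ℝ) + 1) * (1 - h ^ 2) / n :=
    Real.sq_sqrt (div_nonneg (mul_nonneg (by positivity) (sub_nonneg.2 hlt.le)) n.cast_nonneg)
  have hα : 0 < α := by positivity
  have hβ : 0 < β := Real.sqrt_pos.2 (div_pos (mul_pos (by positivity) (sub_pos.2 hlt))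
    (by exact_mod_cast hn))
  have hkey := one_le_mul_abs_det_of_subset_section (by simp) hh hu hf hx₀ hLoew hα 0
    (L := β • LinearMap.id) (by simp [hβ.ne'])
    fun x hx => ⟨β⁻¹ • (x - x₀), ?_, by simp [smul_smul, hβ.ne']⟩
  · rw [LinearMap.det_smul, LinearMap.det_id, finrank_euclideanSpace_fin, mul_one, abs_pow,
      abs_of_pos hβ] at hkey
    calc 1 ≤ (α * β ^ n) ^ 2 := one_le_pow₀ hkey
      _ = α ^ 2 * (β ^ 2) ^ n := by ring
      _ = _ := by rw [hα2, hβ2]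
  · have hx' := (AffineIsometry.mem_preimage_closedBall_iff hu hf hx₀).1
      (subset_preimage_of_isLoewner hLoew hx)
    have hrad : β ^ 2 * (1 - (h / α) ^ 2) = 1 - h ^ 2 := by
      have : (n : ℝ) ≠ 0 := by positivity
      rw [div_pow, hα2, hβ2]
      field_simp
      ring
    rw [norm_smul, mul_pow, norm_inv, Real.norm_of_nonneg hβ.le, inv_pow,
      inv_mul_le_iff₀ (by positivity), hrad]
    exact hx'

theorem succ_mul_sq_eq_one : ((n : ℝ) + 1) * h ^ 2 = 1 := by
  have hle := AffineIsometry.sq_le_one_of_preimage_nonempty hu hf hx₀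
    ((hW.mono interior_subset).mono (subset_preimage_of_isLoewner hLoew))
  rcases n.eq_zero_or_pos with rfl | hn
  · have h1 := one_le_mul_abs_det_of_subset_section (by simp) hh hu hf hx₀ hLoew hh 0
      (L := LinearMap.id) (by simp) fun x _ => ⟨0, by simp [hh.ne'], Subsingleton.elim _ _⟩
    simp only [LinearMap.det_id, abs_one, mul_one] at h1
    push_cast
    nlinarith
  · by_contra hne
    have hn' : (0 : ℝ) < n := by exact_mod_cast hn
    have hamgm := one_add_mul_one_sub_div_pow_lt_one (n := n) (sub_ne_zero.2 hne)
      (by nlinarith) (by nlinarith)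
    have hsub : 1 - (((n : ℝ) + 1) * h ^ 2 - 1) / n = ((n : ℝ) + 1) * (1 - h ^ 2) / n := by
      field_simp
      ring
    rw [add_sub_cancel, hsub] at hamgm
    linarith [one_le_succ_mul_sq_mul_pow hu hf hx₀ hLoew hW hh hn]

theorem isLoewner_preimage_closedBall : IsLoewner W (f ⁻¹' closedBall 0 1) := by
  have hWB := subset_preimage_of_isLoewner hLoew
  rcases n.eq_zero_or_pos with rfl | hn
  · exact isLoewner_of_nonempty_of_fin_zero (hW.mono interior_subset) hWB
  have hlt := height_sq_lt_one hu hf hx₀ hLoew hW hn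
  set r := √(1 - h ^ 2)
  have hr : 0 < r := Real.sqrt_pos.2 (sub_pos.2 hlt)
  rw [AffineIsometry.preimage_closedBall_eq hu hf hx₀ hlt.le] at hWB ⊢
  refine isLoewner_closedBall hr hWB fun c L hWL => ?_
  have hdet : LinearMap.det (r⁻¹ • (L : EuclideanSpace ℝ (Fin n) →ₗ[ℝ] _)) =
      (r ^ n)⁻¹ * LinearMap.det (L : EuclideanSpace ℝ (Fin n) →ₗ[ℝ] _) := by
    rw [LinearMap.det_smul, finrank_euclideanSpace_fin, inv_pow]
  have hkey := one_le_mul_abs_det_of_subset_section (by simp) hh hu hf hx₀ hLoew one_pos (c - x₀)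
    (hdet ▸ mul_ne_zero (inv_ne_zero (pow_pos hr n).ne') L.isUnit_det'.ne_zero) fun x hx => ?_
  · rwa [one_mul, hdet, abs_mul, abs_inv, abs_of_pos (pow_pos hr n), ← div_eq_inv_mul,
      one_le_div (pow_pos hr n)] at hkey
  · obtain ⟨ζ, hζ, rfl⟩ := hWL hx
    refine ⟨r • ζ, ?_, by simp [smul_smul, hr.ne']⟩
    rw [div_one, norm_smul, mul_pow, Real.norm_of_nonneg hr.le, Real.sq_sqrt (sub_nonneg.2 hlt.le)]
    exact mul_le_of_le_one_right (sub_nonneg.2 hlt.le)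
      (pow_le_one₀ (norm_nonneg _) (mem_closedBall_zero_iff.1 hζ))

end Hyperplane

theorem stmt_7_general (n : ℕ) (h : ℝ) (hh : 0 < h)
    (u : EuclideanSpace ℝ (Fin (n + 1))) (hu : ‖u‖ = 1)
    (f : EuclideanSpace ℝ (Fin n) →ᵃⁱ[ℝ] EuclideanSpace ℝ (Fin (n + 1)))
    (hf : ∀ x, (inner ℝ u (f x) : ℝ) = h)
    (W' : Set (EuclideanSpace ℝ (Fin n)))
    (hWne : (interior W').Nonempty)
    (hLoew : IsLoewner (convexHull ℝ ((f '' W') ∪ -(f '' W')))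
      (Metric.closedBall (0 : EuclideanSpace ℝ (Fin (n + 1))) 1)) :
    h = 1 / Real.sqrt (n + 1) ∧
      IsLoewner W' (f ⁻¹' Metric.closedBall (0 : EuclideanSpace ℝ (Fin (n + 1))) 1) := by
  obtain ⟨x₀, hx₀⟩ := AffineIsometry.exists_apply_eq_smul (by simp) hu hf
  refine ⟨?_, isLoewner_preimage_closedBall hu hf hx₀ hLoew hWne hh⟩
  have hsq := eq_inv_of_mul_eq_one_right (succ_mul_sq_eq_one hu hf hx₀ hLoew hWne hh)
  rw [← Real.sqrt_sq hh.le, hsq, Real.sqrt_inv, one_div]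

/-- If the symmetrization `Ω = conv(W ∪ −W)` of a convex body `W` sitting in the affine
hyperplane `{x : ⟪u,x⟫ = h}` (`u` a unit vector, `h > 0`) of `ℝ^{n+1}` is in Löwner
position (its Löwner ellipsoid is the unit ball), then `h = 1/√(n+1)` and the section
`B ∩ H` — i.e. the preimage of the unit ball under the isometric parametrization `f` of
the hyperplane — is the Löwner ellipsoid of `W` within `H`. -/
theorem stmt_7 (n : ℕ) (h : ℝ) (hh : 0 < h)
    (u : EuclideanSpace ℝ (Fin (n + 1))) (hu : ‖u‖ = 1)
    (f : EuclideanSpace ℝ (Fin n) →ᵃⁱ[ℝ] EuclideanSpace ℝ (Fin (n + 1)))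
    (hf : ∀ x, (inner ℝ u (f x) : ℝ) = h)
    (W' : Set (EuclideanSpace ℝ (Fin n)))
    (hWc : Convex ℝ W') (hWcp : IsCompact W') (hWne : (interior W').Nonempty)
    (hLoew : IsLoewner (convexHull ℝ ((f '' W') ∪ -(f '' W')))
      (Metric.closedBall (0 : EuclideanSpace ℝ (Fin (n + 1))) 1)) :
    h = 1 / Real.sqrt (n + 1) ∧
      IsLoewner W' (f ⁻¹' Metric.closedBall (0 : EuclideanSpace ℝ (Fin (n + 1))) 1) :=
  stmt_7_general n h hh u hu f hf W' hWne hLoew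
end

section
/- The bilinear form ⟨A,B⟩ = (1 + 1/D)·tr(AB) − (1/D)·tr(A)·tr(B) on the real space of Hermitian D×D matrices is a positive-definite inner product, and every Hermitian A with trace norm ‖A‖₁ ≤ 1 satisfies ⟨A,A⟩ ≤ 1 (i.e., Δ(ℂ^D) is contained in the corresponding unit ball). -/
/-!
Both the form and the trace norm depend on a Hermitian matrix only through its eigenvalues
`x : Fin D → ℝ`: `⟨A,A⟩ = (1 + 1/D) ∑ xᵢ² − (1/D) (∑ xᵢ)²` and `‖A‖₁ = ∑ |xᵢ|`.
Positivity is Cauchy–Schwarz `(∑ xᵢ)² ≤ D ∑ xᵢ²`. For the unit ball, expanding both squares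
gives `2 ∑ xᵢ² ≤ (∑ |xᵢ|)² + (∑ xᵢ)²` (off-diagonal terms `|xᵢ||xⱼ| + xᵢxⱼ` are nonnegative), so
`⟨A,A⟩ ≤ ∑ xᵢ² + (1/D) ((∑ |xᵢ|)² − ∑ xᵢ²) ≤ (∑ |xᵢ|)²` once `D ≥ 1`.
-/

/-- The scalar product `⟨A,B⟩ = (1 + 1/D) tr(AB) − (1/D) tr(A) tr(B)`. -/
noncomputable def hermForm (D : ℕ) (A B : Matrix (Fin D) (Fin D) ℂ) : ℝ :=
  (1 + 1 / (D : ℝ)) * (Matrix.trace (A * B)).re -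
    (1 / (D : ℝ)) * ((Matrix.trace A).re * (Matrix.trace B).re)

/-- The trace norm of a Hermitian matrix. -/
noncomputable def traceNorm {D : ℕ} (A : Matrix (Fin D) (Fin D) ℂ)
    (hA : A.IsHermitian) : ℝ := ∑ i, |hA.eigenvalues i|

open Finset

theorem Matrix.trace_conjStarAlgAut {n 𝕜 : Type*} [Fintype n] [DecidableEq n] [RCLike 𝕜]
    (u : Matrix.unitaryGroup n 𝕜) (M : Matrix n n 𝕜) :
    (Unitary.conjStarAlgAut 𝕜 _ u M).trace = M.trace := by
  rw [Unitary.conjStarAlgAut_apply, Matrix.trace_mul_cycle, Unitary.coe_star_mul_self, one_mul]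

theorem Matrix.IsHermitian.trace_mul_self_eq_sum_eigenvalues_sq {n 𝕜 : Type*} [Fintype n]
    [DecidableEq n] [RCLike 𝕜] {A : Matrix n n 𝕜} (hA : A.IsHermitian) :
    (A * A).trace = ∑ i, (hA.eigenvalues i : 𝕜) ^ 2 := by
  conv_lhs => rw [hA.spectral_theorem, ← map_mul, trace_conjStarAlgAut, diagonal_mul_diagonal]
  simp [trace_diagonal, sq]

theorem two_mul_sum_sq_le_sq_sum_abs_add_sq_sum {ι : Type*} (s : Finset ι) (x : ι → ℝ) :
    2 * ∑ i ∈ s, x i ^ 2 ≤ (∑ i ∈ s, |x i|) ^ 2 + (∑ i ∈ s, x i) ^ 2 := by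
  classical
  calc 2 * ∑ i ∈ s, x i ^ 2 = ∑ i ∈ s, ∑ j ∈ s, if i = j then 2 * x i ^ 2 else 0 := by
        simp [mul_sum]
    _ ≤ ∑ i ∈ s, ∑ j ∈ s, (|x i| * |x j| + x i * x j) := by
        gcongr with i _ j _
        split_ifs with h
        · subst h; rw [abs_mul_abs_self]; linarith
        · rw [← abs_mul]; linarith [neg_abs_le (x i * x j)]
    _ = (∑ i ∈ s, |x i|) ^ 2 + (∑ i ∈ s, x i) ^ 2 := by
        simp only [sq, sum_mul_sum, ← sum_add_distrib]

section SpectralForm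

variable {ι : Type*} [Fintype ι] {D : ℝ}

noncomputable def spectralForm (D : ℝ) (x : ι → ℝ) : ℝ :=
  (1 + 1 / D) * ∑ i, x i ^ 2 - 1 / D * (∑ i, x i) ^ 2

theorem spectralForm_pos (hD : (Fintype.card ι : ℝ) ≤ D) {x : ι → ℝ} (hx : x ≠ 0) :
    0 < spectralForm D x := by
  obtain ⟨i, hi⟩ := Function.ne_iff.mp hx
  have hD0 : 0 < D := hD.trans_lt' (by simpa using Fintype.card_pos_iff.mpr ⟨i⟩)
  have hq : 0 < ∑ i, x i ^ 2 :=
    sum_pos' (fun j _ ↦ sq_nonneg (x j)) ⟨i, mem_univ i, pow_two_pos_of_ne_zero hi⟩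
  have hCS : (∑ i, x i) ^ 2 ≤ D * ∑ i, x i ^ 2 :=
    (sq_sum_le_card_mul_sum_sq ..).trans (by gcongr; simpa using hD)
  have hform : spectralForm D x = (∑ i, x i ^ 2 + (D * ∑ i, x i ^ 2 - (∑ i, x i) ^ 2)) / D := by
    unfold spectralForm; field_simp; ring
  rw [hform]
  exact div_pos (by linarith) hD0

theorem spectralForm_le_sq_sum_abs (hD : 1 ≤ D) (x : ι → ℝ) :
    spectralForm D x ≤ (∑ i, |x i|) ^ 2 := by
  have h2 := two_mul_sum_sq_le_sq_sum_abs_add_sq_sum univ x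
  have hq : ∑ i, x i ^ 2 ≤ (∑ i, |x i|) ^ 2 := by
    simpa using sum_sq_le_sq_sum_of_nonneg (s := univ) (fun i _ ↦ abs_nonneg (x i))
  have hD0 : 0 ≤ 1 / D := one_div_nonneg.mpr (by linarith)
  have hD1 : 1 / D ≤ 1 := (div_le_one (by linarith)).mpr hD
  calc spectralForm D x
      = ∑ i, x i ^ 2 + 1 / D * (∑ i, x i ^ 2 - (∑ i, x i) ^ 2) := by unfold spectralForm; ring
    _ ≤ ∑ i, x i ^ 2 + 1 / D * ((∑ i, |x i|) ^ 2 - ∑ i, x i ^ 2) := by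
        gcongr _ + _ * ?_; linarith
    _ ≤ ∑ i, x i ^ 2 + 1 * ((∑ i, |x i|) ^ 2 - ∑ i, x i ^ 2) := by gcongr _ + ?_ * _
    _ = (∑ i, |x i|) ^ 2 := by ring

end SpectralForm

theorem hermForm_self_eq_spectralForm {D : ℕ} {A : Matrix (Fin D) (Fin D) ℂ}
    (hA : A.IsHermitian) : hermForm D A A = spectralForm D hA.eigenvalues := by
  rw [hermForm, spectralForm, hA.trace_mul_self_eq_sum_eigenvalues_sq, hA.trace_eq_sum_eigenvalues]
  simp [sq]

/-- The bilinear form `⟨A,B⟩ = (1+1/D) tr(AB) − (1/D) tr A tr B` is positive definite on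
Hermitian matrices, and every Hermitian matrix of trace norm at most one lies in its unit
ball. -/
theorem stmt_9 (D : ℕ) (hD : 0 < D) :
    (∀ A : Matrix (Fin D) (Fin D) ℂ, A.IsHermitian → A ≠ 0 → 0 < hermForm D A A) ∧
    (∀ (A : Matrix (Fin D) (Fin D) ℂ) (hA : A.IsHermitian),
      traceNorm A hA ≤ 1 → hermForm D A A ≤ 1) := by
  constructor
  · intro A hA hA0
    rw [hermForm_self_eq_spectralForm hA]
    exact spectralForm_pos (by simp) (hA.eigenvalues_eq_zero_iff.not.mpr hA0)
  · intro A hA hnorm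
    have hD1 : (1 : ℝ) ≤ D := by exact_mod_cast hD
    have hnorm0 : 0 ≤ traceNorm A hA := sum_nonneg fun i _ ↦ abs_nonneg _
    calc hermForm D A A = spectralForm D hA.eigenvalues := hermForm_self_eq_spectralForm hA
      _ ≤ traceNorm A hA ^ 2 := spectralForm_le_sq_sum_abs hD1 _
      _ ≤ 1 := pow_le_one₀ hnorm0 hnorm
end

section
/- Every separable state on ℂ^{D₁} ⊗ ℂ^{D₂} has positive partial transpose: if ρ is a finite convex combination of product states ρ₁ ⊗ ρ₂ (with ρ₁, ρ₂ density matrices on ℂ^{D₁}, ℂ^{D₂}), then Tρ (partial transpose with respect to the first factor) is positive semidefinite. -/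
open Kronecker
open scoped ComplexOrder

/-- Partial transpose with respect to the first factor on `ℂ^{D₁} ⊗ ℂ^{D₂}`. -/
def ptrans {D₁ D₂ : ℕ} (ρ : Matrix (Fin D₁ × Fin D₂) (Fin D₁ × Fin D₂) ℂ) :
    Matrix (Fin D₁ × Fin D₂) (Fin D₁ × Fin D₂) ℂ :=
  fun p q => ρ (q.1, p.2) (p.1, q.2)

open Matrix

section ptrans

variable {D₁ D₂ : ℕ}

theorem ptrans_smul (c : ℂ) (ρ : Matrix (Fin D₁ × Fin D₂) (Fin D₁ × Fin D₂) ℂ) :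
    ptrans (c • ρ) = c • ptrans ρ :=
  rfl

theorem ptrans_sum {ι : Type*} (s : Finset ι)
    (ρ : ι → Matrix (Fin D₁ × Fin D₂) (Fin D₁ × Fin D₂) ℂ) :
    ptrans (∑ i ∈ s, ρ i) = ∑ i ∈ s, ptrans (ρ i) := by
  ext p q
  simp only [ptrans, Matrix.sum_apply]

theorem ptrans_kronecker (A : Matrix (Fin D₁) (Fin D₁) ℂ) (B : Matrix (Fin D₂) (Fin D₂) ℂ) :
    ptrans (A ⊗ₖ B) = Aᵀ ⊗ₖ B :=
  rfl

theorem Matrix.PosSemidef.ptrans_kronecker {A : Matrix (Fin D₁) (Fin D₁) ℂ}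
    {B : Matrix (Fin D₂) (Fin D₂) ℂ} (hA : A.PosSemidef) (hB : B.PosSemidef) :
    (ptrans (A ⊗ₖ B)).PosSemidef := by
  rw [_root_.ptrans_kronecker]
  exact hA.transpose.kronecker hB

end ptrans

theorem stmt_12_general (D₁ D₂ : ℕ) (ι : Type*) [Fintype ι]
    (w : ι → ℝ) (hw0 : ∀ i, 0 ≤ w i)
    (ρ₁ : ι → Matrix (Fin D₁) (Fin D₁) ℂ) (ρ₂ : ι → Matrix (Fin D₂) (Fin D₂) ℂ)
    (hρ₁ : ∀ i, (ρ₁ i).PosSemidef)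
    (hρ₂ : ∀ i, (ρ₂ i).PosSemidef)
    (ρ : Matrix (Fin D₁ × Fin D₂) (Fin D₁ × Fin D₂) ℂ)
    (hρ : ρ = ∑ i, (w i : ℂ) • (ρ₁ i ⊗ₖ ρ₂ i)) :
    (ptrans ρ).PosSemidef := by
  subst hρ
  rw [ptrans_sum]
  refine posSemidef_sum _ fun i _ => ?_
  rw [ptrans_smul]
  exact ((hρ₁ i).ptrans_kronecker (hρ₂ i)).smul (Complex.zero_le_real.mpr (hw0 i))

/-- Peres criterion: every separable state (a finite convex combination of tensor
products of density matrices) has positive semidefinite partial transpose. -/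
theorem stmt_12 (D₁ D₂ : ℕ) (ι : Type*) [Fintype ι]
    (w : ι → ℝ) (hw0 : ∀ i, 0 ≤ w i) (hw1 : ∑ i, w i = 1)
    (ρ₁ : ι → Matrix (Fin D₁) (Fin D₁) ℂ) (ρ₂ : ι → Matrix (Fin D₂) (Fin D₂) ℂ)
    (hρ₁ : ∀ i, (ρ₁ i).PosSemidef) (ht₁ : ∀ i, (ρ₁ i).trace = 1)
    (hρ₂ : ∀ i, (ρ₂ i).PosSemidef) (ht₂ : ∀ i, (ρ₂ i).trace = 1)
    (ρ : Matrix (Fin D₁ × Fin D₂) (Fin D₁ × Fin D₂) ℂ)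
    (hρ : ρ = ∑ i, (w i : ℂ) • (ρ₁ i ⊗ₖ ρ₂ i)) :
    (ptrans ρ).PosSemidef :=
  stmt_12_general D₁ D₂ ι w hw0 ρ₁ ρ₂ hρ₁ hρ₂ ρ hρ
end

section
/- For convex bodies K ⊂ ℝ^n and K' ⊂ ℝ^{n'}, the symmetrization commutes with projective tensor product: conv((K ⊗̂ K') ∪ −(K ⊗̂ K')) = conv(K ∪ −K) ⊗̂ conv(K' ∪ −K'). In particular, with 𝒮 = 𝒟(ℋ₁) ⊗̂ 𝒟(ℋ₂) the set of separable states on ℋ₁ ⊗ ℋ₂, its symmetrization Σ = conv(𝒮 ∪ −𝒮) equals Δ(ℋ₁) ⊗̂ Δ(ℋ₂), where Δ is the Hermitian trace-norm unit ball. -/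
/-!
A bilinear map `f` sends `conv A × conv B` into `conv (f (A × B))`, since it is linear in each
variable separately. Applied to `A ∪ -A` and `B ∪ -B`, whose products under `f` are
`f (A × B) ∪ -f (A × B)`, this shows that symmetrizing the factors and then taking the projective
tensor product gives the symmetrization of the projective tensor product. Both the abstract tensor
product `x ⊗ₜ x'` and the Kronecker product of matrices are such bilinear maps.
-/

open Pointwise Kronecker
open scoped TensorProduct ComplexOrder

/-- The projective tensor product of convex bodies. -/
noncomputable def projTensor {n n' : ℕ}
    (K : Set (EuclideanSpace ℝ (Fin n))) (K' : Set (EuclideanSpace ℝ (Fin n'))) :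
    Set (EuclideanSpace ℝ (Fin n) ⊗[ℝ] EuclideanSpace ℝ (Fin n')) :=
  convexHull ℝ {z | ∃ x ∈ K, ∃ x' ∈ K', z = x ⊗ₜ[ℝ] x'}

/-- The set of density matrices on `ℂ^D`. -/
def densitySet (D : ℕ) : Set (Matrix (Fin D) (Fin D) ℂ) :=
  {ρ | ρ.PosSemidef ∧ ρ.trace = 1}

open Set

section Bilinear

variable {𝕜 E F G : Type*}

theorem Set.setOf_exists_eq_eq_image2 {α β γ : Type*} (g : α → β → γ) (s : Set α) (t : Set β) :
    {z | ∃ x ∈ s, ∃ y ∈ t, z = g x y} = image2 g s t := by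
  ext; simp [eq_comm]

theorem LinearMap.convexHull_image2_convexHull [CommSemiring 𝕜] [PartialOrder 𝕜]
    [AddCommMonoid E] [Module 𝕜 E] [AddCommMonoid F] [Module 𝕜 F]
    [AddCommMonoid G] [Module 𝕜 G] (f : E →ₗ[𝕜] F →ₗ[𝕜] G) (A : Set E) (B : Set F) :
    convexHull 𝕜 (image2 (f · ·) (convexHull 𝕜 A) (convexHull 𝕜 B)) =
      convexHull 𝕜 (image2 (f · ·) A B) := by
  refine le_antisymm (convexHull_min ?_ (convex_convexHull 𝕜 _))
    (convexHull_mono (image2_subset (subset_convexHull 𝕜 A) (subset_convexHull 𝕜 B)))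
  rintro _ ⟨x, hx, y, hy, rfl⟩
  have hleft : ∀ b ∈ B, f x b ∈ convexHull 𝕜 (image2 (f · ·) A B) := by
    intro b hb
    have hxb : f x b ∈ convexHull 𝕜 (f.flip b '' A) := by
      rw [← LinearMap.image_convexHull]; exact mem_image_of_mem _ hx
    refine convexHull_mono ?_ hxb
    rintro _ ⟨a, ha, rfl⟩
    exact mem_image2_of_mem ha hb
  have hxy : f x y ∈ convexHull 𝕜 (f x '' B) := by
    rw [← LinearMap.image_convexHull]; exact mem_image_of_mem _ hy
  exact convexHull_min (image_subset_iff.2 hleft) (convex_convexHull 𝕜 _) hxy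

theorem LinearMap.image2_union_neg [CommRing 𝕜] [AddCommGroup E] [Module 𝕜 E]
    [AddCommGroup F] [Module 𝕜 F] [AddCommGroup G] [Module 𝕜 G]
    (f : E →ₗ[𝕜] F →ₗ[𝕜] G) (A : Set E) (B : Set F) :
    image2 (f · ·) (A ∪ -A) (B ∪ -B) = image2 (f · ·) A B ∪ -image2 (f · ·) A B := by
  ext z
  simp only [mem_image2, mem_union, mem_neg]
  constructor
  · rintro ⟨x, hx | hx, y, hy | hy, rfl⟩
    · exact Or.inl ⟨x, hx, y, hy, rfl⟩
    · exact Or.inr ⟨x, hx, -y, hy, by simp⟩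
    · exact Or.inr ⟨-x, hx, y, hy, by simp⟩
    · exact Or.inl ⟨-x, hx, -y, hy, by simp⟩
  · rintro (⟨x, hx, y, hy, rfl⟩ | ⟨x, hx, y, hy, hz⟩)
    · exact ⟨x, Or.inl hx, y, Or.inl hy, rfl⟩
    · exact ⟨-x, Or.inr (by simpa using hx), y, Or.inl hy, by simp [hz]⟩

theorem convexHull_union_neg_convexHull [Ring 𝕜] [PartialOrder 𝕜] [AddCommGroup G]
    [Module 𝕜 G] (T : Set G) :
    convexHull 𝕜 (convexHull 𝕜 T ∪ -convexHull 𝕜 T) = convexHull 𝕜 (T ∪ -T) := by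
  rw [← convexHull_neg, convexHull_convexHull_union_left, convexHull_convexHull_union_right]

theorem LinearMap.convexHull_image2_symmetrization [CommRing 𝕜] [PartialOrder 𝕜]
    [AddCommGroup E] [Module 𝕜 E] [AddCommGroup F] [Module 𝕜 F] [AddCommGroup G] [Module 𝕜 G]
    (f : E →ₗ[𝕜] F →ₗ[𝕜] G) (A : Set E) (B : Set F) :
    convexHull 𝕜 (convexHull 𝕜 (image2 (f · ·) A B) ∪ -convexHull 𝕜 (image2 (f · ·) A B)) =
      convexHull 𝕜 (image2 (f · ·) (convexHull 𝕜 (A ∪ -A)) (convexHull 𝕜 (B ∪ -B))) := by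
  rw [convexHull_union_neg_convexHull, f.convexHull_image2_convexHull, f.image2_union_neg]

end Bilinear

theorem stmt_19_general (n n' : ℕ)
    (K : Set (EuclideanSpace ℝ (Fin n))) (K' : Set (EuclideanSpace ℝ (Fin n')))
    (D₁ D₂ : ℕ) :
    (convexHull ℝ (projTensor K K' ∪ -projTensor K K') =
      projTensor (convexHull ℝ (K ∪ -K)) (convexHull ℝ (K' ∪ -K'))) ∧
    (convexHull ℝ
        ((convexHull ℝ {ρ : Matrix (Fin D₁ × Fin D₂) (Fin D₁ × Fin D₂) ℂ |
            ∃ ρ₁ ∈ densitySet D₁, ∃ ρ₂ ∈ densitySet D₂, ρ = ρ₁ ⊗ₖ ρ₂}) ∪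
          -(convexHull ℝ {ρ : Matrix (Fin D₁ × Fin D₂) (Fin D₁ × Fin D₂) ℂ |
            ∃ ρ₁ ∈ densitySet D₁, ∃ ρ₂ ∈ densitySet D₂, ρ = ρ₁ ⊗ₖ ρ₂})) =
      convexHull ℝ {A : Matrix (Fin D₁ × Fin D₂) (Fin D₁ × Fin D₂) ℂ |
        ∃ B ∈ convexHull ℝ (densitySet D₁ ∪ -densitySet D₁),
          ∃ C ∈ convexHull ℝ (densitySet D₂ ∪ -densitySet D₂), A = B ⊗ₖ C}) := by
  simp only [projTensor, setOf_exists_eq_eq_image2]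
  refine ⟨?_, (Matrix.kroneckerMapBilinear (LinearMap.mul ℝ ℂ)).convexHull_image2_symmetrization
    (densitySet D₁) (densitySet D₂)⟩
  simpa only [TensorProduct.mk_apply] using
    (TensorProduct.mk ℝ _ _).convexHull_image2_symmetrization K K'

/-- Symmetrization commutes with the projective tensor product of convex bodies; in
particular the symmetrization `Σ = conv(𝒮 ∪ −𝒮)` of the set of separable states on
`ℂ^{D₁} ⊗ ℂ^{D₂}` equals `Δ(ℂ^{D₁}) ⊗̂ Δ(ℂ^{D₂})`, the projective tensor product of the
Hermitian trace-norm unit balls `Δ = conv(𝒟 ∪ −𝒟)`. -/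
theorem stmt_19 (n n' : ℕ)
    (K : Set (EuclideanSpace ℝ (Fin n))) (K' : Set (EuclideanSpace ℝ (Fin n')))
    (hKc : Convex ℝ K) (hKcp : IsCompact K) (hKne : (interior K).Nonempty)
    (hKc' : Convex ℝ K') (hKcp' : IsCompact K') (hKne' : (interior K').Nonempty)
    (D₁ D₂ : ℕ) :
    (convexHull ℝ (projTensor K K' ∪ -projTensor K K') =
      projTensor (convexHull ℝ (K ∪ -K)) (convexHull ℝ (K' ∪ -K'))) ∧
    (convexHull ℝ
        ((convexHull ℝ {ρ : Matrix (Fin D₁ × Fin D₂) (Fin D₁ × Fin D₂) ℂ |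
            ∃ ρ₁ ∈ densitySet D₁, ∃ ρ₂ ∈ densitySet D₂, ρ = ρ₁ ⊗ₖ ρ₂}) ∪
          -(convexHull ℝ {ρ : Matrix (Fin D₁ × Fin D₂) (Fin D₁ × Fin D₂) ℂ |
            ∃ ρ₁ ∈ densitySet D₁, ∃ ρ₂ ∈ densitySet D₂, ρ = ρ₁ ⊗ₖ ρ₂})) =
      convexHull ℝ {A : Matrix (Fin D₁ × Fin D₂) (Fin D₁ × Fin D₂) ℂ |
        ∃ B ∈ convexHull ℝ (densitySet D₁ ∪ -densitySet D₁),
          ∃ C ∈ convexHull ℝ (densitySet D₂ ∪ -densitySet D₂), A = B ⊗ₖ C}) :=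
  stmt_19_general n n' K K' D₁ D₂
end
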